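/- arXiv:2412.20963 — 2 statements merged into one kernel-verified Lean document; each statement's English description precedes it below -/
import Mathlib

section
/- Let P be the swap operator on ℂ^d ⊗ ℂ^d (d ≥ 1). The extreme points of the convex set of density operators ρ on ℂ^d ⊗ ℂ^d satisfying P ρ P = ρ are exactly the rank-one orthogonal projections onto unit vectors ψ satisfying P ψ = ψ or P ψ = −ψ. -/
/-!
A pure state `|ψ⟩⟨ψ|` is extreme among all density matrices: in any convex decomposition of it,
both states have vanishing quadratic form on `ψ^⊥`, which pins them down to `|ψ⟩⟨ψ|`. When
`Pψ = ±ψ` it is `P`-invariant, hence extreme in the smaller set as well.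

Conversely, an extreme point `ρ` of the `P`-invariant states spans an extreme ray of the cone of
`P`-invariant positive matrices, so every `P`-invariant positive summand of `ρ` is a multiple of
`ρ`. Applied to the compressions `¼ (1 ± P) ρ (1 ± P)` this gives `Pρ = ±ρ`; then every eigenvector
`ψ` of `ρ` with eigenvalue `μ ≠ 0` has `Pψ = ±ψ`, and applied to the summand `μ |ψ⟩⟨ψ|` it gives
`ρ = |ψ⟩⟨ψ|`.
-/

open Matrix ComplexOrder

/-- The swap operator `P` on `ℂ^d ⊗ ℂ^d ≅ ℂ^(Fin d × Fin d)`, determined by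
`P (e_i ⊗ e_j) = e_j ⊗ e_i`. -/
def swapMat (d : ℕ) : Matrix (Fin d × Fin d) (Fin d × Fin d) ℂ :=
  fun p q => if p.1 = q.2 ∧ p.2 = q.1 then 1 else 0

lemma mem_extremePoints_iff_forall_eq {E : Type*} [AddCommGroup E] [Module ℝ E] {A : Set E}
    {x : E} :
    x ∈ A.extremePoints ℝ ↔ x ∈ A ∧ ∀ x₁ ∈ A, ∀ x₂ ∈ A, ∀ t : ℝ, 0 < t → t < 1 →
      x = t • x₁ + (1 - t) • x₂ → x₁ = x₂ := by
  refine mem_extremePoints.trans (and_congr_right fun _ => ?_)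
  refine ⟨fun h x₁ h₁ x₂ h₂ t ht ht₁ hx => ?_, fun h x₁ h₁ x₂ h₂ ⟨a, b, ha, hb, hab, hx⟩ => ?_⟩
  · obtain ⟨e₁, e₂⟩ := h x₁ h₁ x₂ h₂ ⟨t, 1 - t, ht, by linarith, by ring, hx.symm⟩
    rw [e₁, e₂]
  · obtain rfl := h x₁ h₁ x₂ h₂ a ha (by linarith) (by rw [← hx, ← hab, add_sub_cancel_left])
    rw [← hx, ← add_smul, hab, one_smul]
    exact ⟨rfl, rfl⟩

def densityMatrices (n : Type*) [Fintype n] : Set (Matrix n n ℂ) :=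
  {σ | σ.PosSemidef ∧ σ.trace = 1}

variable {n : Type*} [Fintype n]

def invariantDensityMatrices (P : Matrix n n ℂ) : Set (Matrix n n ℂ) :=
  {σ | σ.PosSemidef ∧ σ.trace = 1 ∧ P * σ * P = σ}

lemma invariantDensityMatrices_subset (P : Matrix n n ℂ) :
    invariantDensityMatrices P ⊆ densityMatrices n :=
  fun _ hσ => ⟨hσ.1, hσ.2.1⟩

lemma eq_vecMulVec_of_forall_orthogonal {σ : Matrix n n ℂ} (hσ : σ.PosSemidef)
    (htr : σ.trace = 1) {ψ : n → ℂ} (hψ : star ψ ⬝ᵥ ψ = 1)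
    (h : ∀ x, star ψ ⬝ᵥ x = 0 → star x ⬝ᵥ σ *ᵥ x = 0) :
    σ = vecMulVec ψ (star ψ) := by
  have hker (x : n → ℂ) : σ *ᵥ x = (star ψ ⬝ᵥ x) • σ *ᵥ ψ := by
    have hx : star ψ ⬝ᵥ (x - (star ψ ⬝ᵥ x) • ψ) = 0 := by
      simp [dotProduct_sub, dotProduct_smul, hψ]
    have := (hσ.dotProduct_mulVec_zero_iff _).mp (h _ hx)
    rwa [mulVec_sub, mulVec_smul, sub_eq_zero] at this
  have hσ₁ : σ = vecMulVec (σ *ᵥ ψ) (star ψ) := mulVec_injective <| funext fun x => by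
    rw [hker, vecMulVec_mulVec, op_smul_eq_smul]
  -- Hermiticity moves `σ ψ` to the other side, which forces it to be a multiple of `ψ`.
  have hσ₂ : σ = vecMulVec ψ (star (σ *ᵥ ψ)) := by
    conv_lhs => rw [← hσ.1.eq, hσ₁, conjTranspose_vecMulVec, star_star]
  set c := star (σ *ᵥ ψ) ⬝ᵥ ψ
  have hσψ : σ *ᵥ ψ = c • ψ := by
    conv_lhs => rw [hσ₂, vecMulVec_mulVec, op_smul_eq_smul]
  have hc : c = 1 := by
    rw [← htr, hσ₁, hσψ, trace_vecMulVec, smul_dotProduct, dotProduct_comm, hψ, smul_eq_mul,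
      mul_one]
  rw [hσ₁, hσψ, hc, one_smul]

lemma vecMulVec_mem_extremePoints_densityMatrices {ψ : n → ℂ} (hψ : star ψ ⬝ᵥ ψ = 1) :
    vecMulVec ψ (star ψ) ∈ (densityMatrices n).extremePoints ℝ := by
  refine ⟨⟨posSemidef_vecMulVec_self_star ψ, by rw [trace_vecMulVec, dotProduct_comm, hψ]⟩,
    fun ρ₁ h₁ ρ₂ h₂ ⟨a, b, ha, hb, _, hρ⟩ => ?_⟩
  refine eq_vecMulVec_of_forall_orthogonal h₁.1 h₁.2 hψ fun x hx => ?_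
  have hsum : (a : ℂ) * (star x ⬝ᵥ ρ₁ *ᵥ x) + (b : ℂ) * (star x ⬝ᵥ ρ₂ *ᵥ x) = 0 := by
    simpa only [add_mulVec, smul_mulVec, dotProduct_add, dotProduct_smul, vecMulVec_mulVec,
      op_smul_eq_smul, hx, zero_smul, dotProduct_zero, Complex.real_smul]
      using congrArg (fun M => star x ⬝ᵥ M *ᵥ x) hρ
  have h₁x := mul_nonneg (Complex.zero_le_real.mpr ha.le) (h₁.1.dotProduct_mulVec_nonneg x)
  have h₂x := mul_nonneg (Complex.zero_le_real.mpr hb.le) (h₂.1.dotProduct_mulVec_nonneg x)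
  have := (add_eq_zero_iff_of_nonneg h₁x h₂x).mp hsum |>.1
  exact (mul_eq_zero.mp this).resolve_left (by exact_mod_cast ha.ne')

lemma smul_mem_invariantDensityMatrices {P A : Matrix n n ℂ} (hA : A.PosSemidef)
    (hAP : P * A * P = A) {t : ℝ} (ht : 0 < t) (htr : A.trace = t) :
    (t⁻¹ : ℝ) • A ∈ invariantDensityMatrices P := by
  refine ⟨hA.smul (inv_nonneg.mpr ht.le), ?_, by rw [mul_smul_comm, smul_mul_assoc, hAP]⟩
  rw [trace_smul, htr, Complex.real_smul, Complex.ofReal_inv, inv_mul_cancel₀]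
  exact_mod_cast ht.ne'

-- An extreme point of the base of a cone spans an extreme ray.
lemma eq_trace_smul_of_add_eq {P ρ A B : Matrix n n ℂ}
    (hρ : ρ ∈ (invariantDensityMatrices P).extremePoints ℝ)
    (hA : A.PosSemidef) (hAP : P * A * P = A) (hB : B.PosSemidef) (hBP : P * B * P = B)
    (hAB : A + B = ρ) : A = A.trace • ρ := by
  set t := A.trace.re
  have hAt : A.trace = t :=
    Complex.eq_re_of_ofReal_le (r := 0) (by rw [Complex.ofReal_zero]; exact hA.trace_nonneg)
  have hBt : B.trace = (1 - t : ℝ) := by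
    rw [Complex.ofReal_sub, Complex.ofReal_one, ← hAt, ← hρ.1.2.1, ← hAB, trace_add,
      add_sub_cancel_left]
  have ht₀ : 0 ≤ t := Complex.zero_le_real.mp (hAt ▸ hA.trace_nonneg)
  have ht₁ : 0 ≤ 1 - t := Complex.zero_le_real.mp (hBt ▸ hB.trace_nonneg)
  rcases ht₀.eq_or_lt with ht₀ | ht₀
  · have : A = 0 := hA.trace_eq_zero_iff.mp (by rw [hAt, ← ht₀, Complex.ofReal_zero])
    rw [this, trace_zero, zero_smul]
  rcases ht₁.eq_or_lt with ht₁ | ht₁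
  · have : B = 0 := hB.trace_eq_zero_iff.mp (by rw [hBt, ← ht₁, Complex.ofReal_zero])
    rw [← hAB, this, add_zero, hAt, show t = 1 by linarith, Complex.ofReal_one, one_smul]
  have hmem := hρ.2 (smul_mem_invariantDensityMatrices hA hAP ht₀ hAt)
    (smul_mem_invariantDensityMatrices hB hBP ht₁ hBt)
    ⟨t, 1 - t, ht₀, ht₁, by ring, by
      rw [smul_smul, smul_smul, mul_inv_cancel₀ ht₀.ne', mul_inv_cancel₀ ht₁.ne', one_smul,
        one_smul, hAB]⟩
  rw [← hmem, hAt, Complex.coe_smul, smul_smul, mul_inv_cancel₀ ht₀.ne', one_smul]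

lemma mul_eq_self_or_mul_eq_neg_of_mem_extremePoints [DecidableEq n] {P ρ : Matrix n n ℂ}
    (hP : P * P = 1) (hPH : Pᴴ = P) (hρ : ρ ∈ (invariantDensityMatrices P).extremePoints ℝ) :
    P * ρ = ρ ∨ P * ρ = -ρ := by
  obtain ⟨hρpsd, -, hρP⟩ := hρ.1
  -- `A` and `B` are the compressions of `ρ` to the `±1` eigenspaces of `P`.
  set A : Matrix n n ℂ := (4⁻¹ : ℝ) • ((1 + P) * ρ * (1 + P))
  set B : Matrix n n ℂ := (4⁻¹ : ℝ) • ((1 - P) * ρ * (1 - P))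
  have hA : A.PosSemidef := by
    have := hρpsd.mul_mul_conjTranspose_same (1 + P)
    rw [conjTranspose_add, conjTranspose_one, hPH] at this
    exact this.smul (by norm_num : (0 : ℝ) ≤ 4⁻¹)
  have hB : B.PosSemidef := by
    have := hρpsd.mul_mul_conjTranspose_same (1 - P)
    rw [conjTranspose_sub, conjTranspose_one, hPH] at this
    exact this.smul (by norm_num : (0 : ℝ) ≤ 4⁻¹)
  have hP_add : P * (1 + P) = 1 + P := by rw [mul_add, mul_one, hP, add_comm]
  have h_addP : (1 + P) * P = 1 + P := by rw [add_mul, one_mul, hP, add_comm]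
  have hP_sub : P * (1 - P) = -(1 - P) := by rw [mul_sub, mul_one, hP, neg_sub]
  have h_subP : (1 - P) * P = -(1 - P) := by rw [sub_mul, one_mul, hP, neg_sub]
  have hPA : P * A = A := by rw [mul_smul_comm, ← mul_assoc, ← mul_assoc, hP_add]
  have hAP : A * P = A := by rw [smul_mul_assoc, mul_assoc, h_addP]
  have hPB : P * B = -B := by
    rw [mul_smul_comm, ← mul_assoc, ← mul_assoc, hP_sub, neg_mul, neg_mul, smul_neg]
  have hBP : B * P = -B := by rw [smul_mul_assoc, mul_assoc, h_subP, mul_neg, smul_neg]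
  have hAB : A + B = ρ := by
    have : (1 + P) * ρ * (1 + P) + (1 - P) * ρ * (1 - P) = 2 • ρ + 2 • (P * ρ * P) := by
      noncomm_ring
    rw [← smul_add, this, hρP]
    module
  have hρA := eq_trace_smul_of_add_eq hρ hA (by rw [hPA, hAP]) hB
    (by rw [hPB, neg_mul, hBP, neg_neg]) hAB
  by_cases h0 : A.trace = 0
  · right
    rw [h0, zero_smul] at hρA
    rw [← hAB, hρA, zero_add, hPB]
  · left
    rw [← inv_smul_eq_iff₀ h0] at hρA
    rw [← hρA, mul_smul_comm, hPA]

lemma mulVec_eq_smul_of_mul_eq_smul {P ρ : Matrix n n ℂ} {c μ : ℂ} {v : n → ℂ}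
    (hPρ : P * ρ = c • ρ) (hv : ρ *ᵥ v = μ • v) (hμ : μ ≠ 0) : P *ᵥ v = c • v := by
  refine smul_right_injective _ hμ (?_ : μ • P *ᵥ v = μ • c • v)
  rw [← mulVec_smul, ← hv, mulVec_mulVec, hPρ, smul_mulVec, hv, smul_comm]

lemma mul_vecMulVec_mul_eq_self {P : Matrix n n ℂ} (hPH : Pᴴ = P) {ψ : n → ℂ}
    (hPψ : P *ᵥ ψ = ψ ∨ P *ᵥ ψ = -ψ) : P * vecMulVec ψ (star ψ) * P = vecMulVec ψ (star ψ) := by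
  have : star ψ ᵥ* P = star (P *ᵥ ψ) := by rw [star_mulVec, hPH]
  rw [mul_vecMulVec, vecMulVec_mul, this]
  rcases hPψ with h | h <;> rw [h]
  rw [star_neg, neg_vecMulVec, vecMulVec_neg, neg_neg]

lemma Matrix.PosSemidef.exists_mulVec_eq_smul_of_ne_zero [DecidableEq n] {ρ : Matrix n n ℂ}
    (hρ : ρ.PosSemidef) (h0 : ρ ≠ 0) :
    ∃ ψ : n → ℂ, ∃ μ : ℝ, 0 < μ ∧ star ψ ⬝ᵥ ψ = 1 ∧ ρ *ᵥ ψ = (μ : ℂ) • ψ := by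
  obtain ⟨i, hi⟩ : ∃ i, hρ.1.eigenvalues i ≠ 0 := by
    by_contra! h
    exact h0 (hρ.1.eigenvalues_eq_zero_iff.mp (funext h))
  refine ⟨hρ.1.eigenvectorBasis i, hρ.1.eigenvalues i, (hρ.eigenvalues_nonneg i).lt_of_ne' hi,
    ?_, ?_⟩
  · rw [dotProduct_comm, ← EuclideanSpace.inner_eq_star_dotProduct,
      hρ.1.eigenvectorBasis.inner_eq_one]
  · rw [hρ.1.mulVec_eigenvectorBasis i, Complex.coe_smul]

-- `ρ - μ |ψ⟩⟨ψ|` is the compression of `ρ` to the orthogonal complement of its eigenvector `ψ`.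
lemma Matrix.PosSemidef.sub_smul_vecMulVec [DecidableEq n] {ρ : Matrix n n ℂ} (hρ : ρ.PosSemidef)
    {ψ : n → ℂ} (hψ : star ψ ⬝ᵥ ψ = 1) {μ : ℝ} (hρψ : ρ *ᵥ ψ = (μ : ℂ) • ψ) :
    (ρ - (μ : ℂ) • vecMulVec ψ (star ψ)).PosSemidef := by
  set Q := vecMulVec ψ (star ψ)
  have hQ : Qᴴ = Q := by rw [conjTranspose_vecMulVec, star_star]
  have hρQ : ρ * Q = (μ : ℂ) • Q := by rw [mul_vecMulVec, hρψ, smul_vecMulVec]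
  have hQρ : Q * ρ = (μ : ℂ) • Q := by
    rw [← hQ, ← hρ.1.eq, ← conjTranspose_mul, hρQ, conjTranspose_smul, Complex.star_def,
      Complex.conj_ofReal]
  have hQQ : Q * Q = Q := by rw [vecMulVec_mul_vecMulVec, hψ, one_smul]
  have : ρ - (μ : ℂ) • Q = (1 - Q) * ρ * (1 - Q)ᴴ := by
    rw [conjTranspose_sub, conjTranspose_one, hQ]
    calc ρ - (μ : ℂ) • Q = ρ - Q * ρ - ρ * Q + Q * ρ * Q := by
          rw [hQρ, hρQ, smul_mul_assoc, hQQ]; abel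
      _ = (1 - Q) * ρ * (1 - Q) := by noncomm_ring
  rw [this]
  exact hρ.mul_mul_conjTranspose_same _

lemma exists_eq_vecMulVec_of_mem_extremePoints [DecidableEq n] {P ρ : Matrix n n ℂ}
    (hP : P * P = 1) (hPH : Pᴴ = P) (hρ : ρ ∈ (invariantDensityMatrices P).extremePoints ℝ) :
    ∃ ψ : n → ℂ, star ψ ⬝ᵥ ψ = 1 ∧ (P *ᵥ ψ = ψ ∨ P *ᵥ ψ = -ψ) ∧
      ρ = vecMulVec ψ (star ψ) := by
  obtain ⟨hρpsd, htr, hρP⟩ := hρ.1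
  obtain ⟨ψ, μ, hμ, hψ, hρψ⟩ := hρpsd.exists_mulVec_eq_smul_of_ne_zero (by
    rintro rfl
    exact zero_ne_one (trace_zero n ℂ ▸ htr))
  have hμ' : (μ : ℂ) ≠ 0 := Complex.ofReal_ne_zero.mpr hμ.ne'
  have hPψ : P *ᵥ ψ = ψ ∨ P *ᵥ ψ = -ψ := by
    rcases mul_eq_self_or_mul_eq_neg_of_mem_extremePoints hP hPH hρ with h | h
    · left
      simpa using mulVec_eq_smul_of_mul_eq_smul (c := 1) (by rw [one_smul, h]) hρψ hμ'
    · right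
      simpa using mulVec_eq_smul_of_mul_eq_smul (c := -1) (by rw [neg_one_smul, h]) hρψ hμ'
  set A := (μ : ℂ) • vecMulVec ψ (star ψ)
  have hA : A.PosSemidef :=
    (posSemidef_vecMulVec_self_star ψ).smul (Complex.zero_le_real.mpr hμ.le)
  have hAP : P * A * P = A := by
    rw [mul_smul_comm, smul_mul_assoc, mul_vecMulVec_mul_eq_self hPH hPψ]
  have hρA := eq_trace_smul_of_add_eq hρ hA hAP (hρpsd.sub_smul_vecMulVec hψ hρψ)
    (by rw [mul_sub, sub_mul, hρP, hAP]) (add_sub_cancel _ _)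
  rw [trace_smul, trace_vecMulVec, dotProduct_comm, hψ, smul_eq_mul, mul_one] at hρA
  exact ⟨ψ, hψ, hPψ, smul_right_injective _ hμ' hρA.symm⟩

theorem extremePoints_invariantDensityMatrices [DecidableEq n] {P : Matrix n n ℂ}
    (hP : P * P = 1) (hPH : Pᴴ = P) :
    (invariantDensityMatrices P).extremePoints ℝ = {ρ | ∃ ψ : n → ℂ, star ψ ⬝ᵥ ψ = 1 ∧
      (P *ᵥ ψ = ψ ∨ P *ᵥ ψ = -ψ) ∧ ρ = vecMulVec ψ (star ψ)} := by
  ext ρ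
  refine ⟨exists_eq_vecMulVec_of_mem_extremePoints hP hPH, ?_⟩
  rintro ⟨ψ, hψ, hPψ, rfl⟩
  have hmem : vecMulVec ψ (star ψ) ∈ invariantDensityMatrices P :=
    ⟨posSemidef_vecMulVec_self_star ψ, by rw [trace_vecMulVec, dotProduct_comm, hψ],
      mul_vecMulVec_mul_eq_self hPH hPψ⟩
  exact inter_extremePoints_subset_extremePoints_of_subset (invariantDensityMatrices_subset P)
    ⟨hmem, vecMulVec_mem_extremePoints_densityMatrices hψ⟩

lemma swapMat_mul_self (d : ℕ) : swapMat d * swapMat d = 1 := by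
  ext ⟨a, b⟩ ⟨c, e⟩
  simp [swapMat, mul_apply, Fintype.sum_prod_type, one_apply, Prod.ext_iff, ite_and]

lemma conjTranspose_swapMat (d : ℕ) : (swapMat d)ᴴ = swapMat d := by
  ext ⟨a, b⟩ ⟨c, e⟩
  simp [swapMat, eq_comm, and_comm]

theorem stmt0_general (d : ℕ)
    (C : Set (Matrix (Fin d × Fin d) (Fin d × Fin d) ℂ))
    (hC : C = {σ : Matrix (Fin d × Fin d) (Fin d × Fin d) ℂ |
        σ.PosSemidef ∧ σ.trace = 1 ∧ swapMat d * σ * swapMat d = σ})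
    (ρ : Matrix (Fin d × Fin d) (Fin d × Fin d) ℂ) :
    (ρ ∈ C ∧ ∀ ρ₁ ∈ C, ∀ ρ₂ ∈ C, ∀ t : ℝ, 0 < t → t < 1 →
        ρ = t • ρ₁ + (1 - t) • ρ₂ → ρ₁ = ρ₂) ↔
      (∃ ψ : Fin d × Fin d → ℂ, star ψ ⬝ᵥ ψ = 1 ∧
        ((swapMat d).mulVec ψ = ψ ∨ (swapMat d).mulVec ψ = -ψ) ∧
        ρ = Matrix.vecMulVec ψ (star ψ)) := by
  subst hC
  rw [← mem_extremePoints_iff_forall_eq]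
  exact Set.ext_iff.mp
    (extremePoints_invariantDensityMatrices (swapMat_mul_self d) (conjTranspose_swapMat d)) ρ

/-- the extreme points of the convex set of density operators `ρ` on
`ℂ^d ⊗ ℂ^d` satisfying `P ρ P = ρ` are exactly the rank-one orthogonal projections
`|ψ⟩⟨ψ|` onto unit vectors `ψ` with `P ψ = ψ` or `P ψ = -ψ`. -/
theorem stmt0 (d : ℕ) (hd : 1 ≤ d)
    (C : Set (Matrix (Fin d × Fin d) (Fin d × Fin d) ℂ))
    (hC : C = {σ : Matrix (Fin d × Fin d) (Fin d × Fin d) ℂ |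
        σ.PosSemidef ∧ σ.trace = 1 ∧ swapMat d * σ * swapMat d = σ})
    (ρ : Matrix (Fin d × Fin d) (Fin d × Fin d) ℂ) :
    (ρ ∈ C ∧ ∀ ρ₁ ∈ C, ∀ ρ₂ ∈ C, ∀ t : ℝ, 0 < t → t < 1 →
        ρ = t • ρ₁ + (1 - t) • ρ₂ → ρ₁ = ρ₂) ↔
      (∃ ψ : Fin d × Fin d → ℂ, star ψ ⬝ᵥ ψ = 1 ∧
        ((swapMat d).mulVec ψ = ψ ∨ (swapMat d).mulVec ψ = -ψ) ∧
        ρ = Matrix.vecMulVec ψ (star ψ)) :=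
  stmt0_general d C hC ρ
end

section
/- Let P be the swap operator on ℂ^d ⊗ ℂ^d. For any two unit vectors ψ, φ in ℂ^d ⊗ ℂ^d with P ψ = −ψ and P φ = −φ, there exists a unitary U on ℂ^d ⊗ ℂ^d commuting with P such that U ψ = φ. (The group of swap-commuting unitaries acts transitively on wavefunction-antisymmetric unit vectors.) -/
/-!
A unit vector `ψ` is first multiplied by a phase `θ`, chosen so that `⟨θψ, φ⟩` is real; this is
done by a unitary acting as `θ` on the line through `ψ` and as the identity on its orthogonal
complement. Two unit vectors with real inner product are exchanged by the Householder reflection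
in the hyperplane orthogonal to their difference, which takes `θψ` to `φ`. Both unitaries are
rank-one perturbations `1 + c |a⟩⟨a|` of the identity along an antisymmetric vector `a`, and such
a perturbation commutes with the (Hermitian) swap operator because `a` is an eigenvector of it.
-/

open Matrix

namespace Matrix

open scoped ComplexOrder

variable {n 𝕜 : Type*} [Fintype n] [DecidableEq n] [RCLike 𝕜]

/-- Multiplies the line through `a` by `θ` and fixes its orthogonal complement; for `a = 0` the
division by zero makes it `1`. -/
noncomputable def scaleAlong (a : n → 𝕜) (θ : 𝕜) : Matrix n n 𝕜 :=
  1 + ((θ - 1) / (star a ⬝ᵥ a)) • vecMulVec a (star a)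

theorem scaleAlong_mulVec (a : n → 𝕜) (θ : 𝕜) (v : n → 𝕜) :
    scaleAlong a θ *ᵥ v = v + ((θ - 1) / (star a ⬝ᵥ a) * (star a ⬝ᵥ v)) • a := by
  rw [scaleAlong, add_mulVec, one_mulVec, smul_mulVec, vecMulVec_mulVec, op_smul_eq_smul,
    smul_smul]

theorem scaleAlong_mulVec_self (a : n → 𝕜) (θ : 𝕜) : scaleAlong a θ *ᵥ a = θ • a := by
  rcases eq_or_ne a 0 with rfl | ha
  · simp [scaleAlong]
  have hk : star a ⬝ᵥ a ≠ 0 := dotProduct_star_self_eq_zero.not.mpr ha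
  rw [scaleAlong_mulVec, div_mul_cancel₀ _ hk, sub_smul, one_smul, add_sub_cancel]

theorem scaleAlong_mem_unitaryGroup (a : n → 𝕜) {θ : 𝕜} (hθ : star θ * θ = 1) :
    scaleAlong a θ ∈ unitaryGroup n 𝕜 := by
  set k := star a ⬝ᵥ a
  have hk : star k = k := by rw [← star_dotProduct_star, star_star]
  have hsq : vecMulVec a (star a) * vecMulVec a (star a) = k • vecMulVec a (star a) := by
    rw [vecMulVec_mul_vecMulVec, vecMulVec_smul]
  have hcoeff :
      (θ - 1) / k + star ((θ - 1) / k) + (θ - 1) / k * star ((θ - 1) / k) * k = 0 := by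
    rcases eq_or_ne k 0 with h0 | h0
    · simp [h0]
    rw [star_div₀, hk, star_sub, star_one]
    field_simp
    linear_combination hθ
  rw [mem_unitaryGroup_iff, scaleAlong, star_add, star_one, star_smul,
    star_eq_conjTranspose (vecMulVec _ _), conjTranspose_vecMulVec, star_star, mul_add, add_mul,
    add_mul, one_mul, mul_one, one_mul, smul_mul_smul_comm, hsq, smul_smul]
  linear_combination (norm := module) hcoeff • vecMulVec a (star a)

theorem IsHermitian.commute_scaleAlong {M : Matrix n n 𝕜} (hM : M.IsHermitian) {a : n → 𝕜}
    {μ : 𝕜} (hμ : star μ = μ) (ha : M *ᵥ a = μ • a) (θ : 𝕜) : Commute (scaleAlong a θ) M := by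
  have ha' : star a ᵥ* M = μ • star a := by
    rw [← hM.eq, ← star_mulVec, ha, star_smul, hμ]
  have hA : Commute (vecMulVec a (star a)) M := by
    rw [commute_iff_eq, vecMulVec_mul, mul_vecMulVec, ha, ha', vecMulVec_smul, smul_vecMulVec]
  exact (Commute.one_left M).add_left (hA.smul_left _)

theorem scaleAlong_sub_neg_one_mulVec {u v : n → 𝕜} (hu : star u ⬝ᵥ u = 1)
    (hv : star v ⬝ᵥ v = 1) (huv : star v ⬝ᵥ u = star u ⬝ᵥ v) :
    scaleAlong (u - v) (-1) *ᵥ u = v := by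
  rcases eq_or_ne (u - v) 0 with h0 | h0
  · simp [scaleAlong, sub_eq_zero.mp h0]
  have hxu : star (u - v) ⬝ᵥ u = 1 - star v ⬝ᵥ u := by
    rw [star_sub, sub_dotProduct, hu]
  have hxx : star (u - v) ⬝ᵥ (u - v) = 2 * (1 - star v ⬝ᵥ u) := by
    rw [dotProduct_sub, hxu, star_sub, sub_dotProduct, hv, ← huv]
    ring
  have hk : (1 : 𝕜) - star v ⬝ᵥ u ≠ 0 := by
    intro h
    rw [h, mul_zero] at hxx
    exact h0 (dotProduct_star_self_eq_zero.mp hxx)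
  have hcoeff : (-1 - 1) / (2 * (1 - star v ⬝ᵥ u)) * (1 - star v ⬝ᵥ u) = -1 := by
    field_simp
    ring
  rw [scaleAlong_mulVec, hxu, hxx, hcoeff, neg_one_smul, ← sub_eq_add_neg, sub_sub_cancel]

end Matrix

theorem Complex.exists_star_mul_self_eq_one_and_star_mul_eq_norm (c : ℂ) :
    ∃ θ : ℂ, star θ * θ = 1 ∧ star θ * c = ‖c‖ := by
  refine ⟨exp (arg c * I), ?_, ?_⟩
  · rw [star_def, ← exp_conj, ← exp_add]
    simp
  · nth_rewrite 2 [← norm_mul_exp_arg_mul_I c]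
    rw [star_def, ← exp_conj, mul_left_comm, ← exp_add]
    simp

theorem swapMat_isHermitian (d : ℕ) : (swapMat d).IsHermitian := by
  ext p q
  simp only [conjTranspose_apply, swapMat]
  split_ifs <;> simp_all [eq_comm]

/-- the swap-commuting unitaries act transitively on the
wavefunction-antisymmetric unit vectors. -/
theorem stmt10 (d : ℕ) (ψ φ : Fin d × Fin d → ℂ)
    (hψ : star ψ ⬝ᵥ ψ = 1) (hφ : star φ ⬝ᵥ φ = 1)
    (hψa : (swapMat d).mulVec ψ = -ψ) (hφa : (swapMat d).mulVec φ = -φ) :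
    ∃ U ∈ Matrix.unitaryGroup (Fin d × Fin d) ℂ,
      U * swapMat d = swapMat d * U ∧ U.mulVec ψ = φ := by
  obtain ⟨θ, hθ, hθc⟩ :=
    Complex.exists_star_mul_self_eq_one_and_star_mul_eq_norm (star ψ ⬝ᵥ φ)
  set ψ' := θ • ψ
  have hψ' : star ψ' ⬝ᵥ ψ' = 1 := by
    rw [star_smul, smul_dotProduct, dotProduct_smul, hψ, smul_eq_mul, smul_eq_mul, mul_one, hθ]
  have hψ'φ : star ψ' ⬝ᵥ φ = ‖star ψ ⬝ᵥ φ‖ := by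
    rw [star_smul, smul_dotProduct, smul_eq_mul, hθc]
  have hreal : star φ ⬝ᵥ ψ' = star ψ' ⬝ᵥ φ := by
    rw [star_dotProduct, hψ'φ, Complex.star_def, Complex.conj_ofReal]
  have hP := swapMat_isHermitian d
  have hdiff : swapMat d *ᵥ (ψ' - φ) = (-1 : ℂ) • (ψ' - φ) := by
    rw [mulVec_sub, mulVec_smul, hψa, hφa]
    module
  refine ⟨scaleAlong (ψ' - φ) (-1) * scaleAlong ψ θ,
    mul_mem (scaleAlong_mem_unitaryGroup _ (by simp)) (scaleAlong_mem_unitaryGroup _ hθ),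
    (hP.commute_scaleAlong (μ := -1) (by simp) hdiff _).mul_left
      (hP.commute_scaleAlong (μ := -1) (by simp) (by rw [hψa, neg_one_smul]) _), ?_⟩
  rw [← mulVec_mulVec, scaleAlong_mulVec_self, scaleAlong_sub_neg_one_mulVec hψ' hφ hreal]
end
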